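/- arXiv:2106.14677 — 3 statements merged into one kernel-verified Lean document; each statement's English description precedes it below -/
import Mathlib

section
/- No subset of the unit circle S^1 ⊂ ℝ² of diameter (measured by geodesic/angular distance) strictly less than 2π/3 contains the origin in its convex hull. -/
/-!
If `x₁, …, xₙ` are unit vectors with pairwise inner products at least `c` and `w` is a
probability vector, then `‖∑ wᵢ xᵢ‖² ≥ c + (1 - c) ∑ wᵢ²`. By Carathéodory, the origin lies in
the convex hull of `X ⊆ ℝᵈ` only if it is such a combination of at most `d + 1` points of `X`,
and then `∑ wᵢ² ≥ 1 / (d + 1)`, so `0 ≥ (1 + d c) / (d + 1)`. On `S¹` an angular diameter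
`δ < 2π/3` gives `c = cos δ > -1/2`, i.e. `1 + 2 c > 0`.
-/

open scoped RealInnerProductSpace
open Finset Module

section InnerProductSpace

variable {E : Type*} [NormedAddCommGroup E] [InnerProductSpace ℝ E]

theorem mul_sq_sum_add_mul_sum_sq_le_norm_sum_smul_sq {ι : Type*} [DecidableEq ι]
    {s : Finset ι} {v : ι → E} {w : ι → ℝ} {c : ℝ}
    (hv : ∀ i ∈ s, ‖v i‖ = 1) (hc : ∀ i ∈ s, ∀ j ∈ s, i ≠ j → c ≤ ⟪v i, v j⟫)
    (hw : ∀ i ∈ s, 0 ≤ w i) :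
    c * (∑ i ∈ s, w i) ^ 2 + (1 - c) * ∑ i ∈ s, w i ^ 2 ≤ ‖∑ i ∈ s, w i • v i‖ ^ 2 := by
  have hinner : ∀ i ∈ s, ∀ j ∈ s, c + (1 - c) * (if i = j then 1 else 0) ≤ ⟪v i, v j⟫ := by
    intro i hi j hj
    by_cases hij : i = j
    · subst hij
      simp [hv i hi]
    · simpa [hij] using hc i hi j hj hij
  calc c * (∑ i ∈ s, w i) ^ 2 + (1 - c) * ∑ i ∈ s, w i ^ 2
      = ∑ i ∈ s, ∑ j ∈ s, w i * w j * (c + (1 - c) * (if i = j then 1 else 0)) := by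
        simp only [mul_add, sum_add_distrib, mul_ite, mul_one, mul_zero, sum_ite_eq,
          ← sum_mul, ← mul_sum, sq]
        rw [sum_ite_of_true fun _ h ↦ h, ← sum_mul]
        ring
    _ ≤ ∑ i ∈ s, ∑ j ∈ s, w i * w j * ⟪v i, v j⟫ := by
        gcongr with i hi j hj
        · exact mul_nonneg (hw i hi) (hw j hj)
        · exact hinner i hi j hj
    _ = ‖∑ i ∈ s, w i • v i‖ ^ 2 := by
        rw [← real_inner_self_eq_norm_sq, sum_inner]
        simp_rw [inner_sum, real_inner_smul_left, real_inner_smul_right, mul_assoc]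

theorem zero_notMem_convexHull_of_le_inner [FiniteDimensional ℝ E] {X : Set E} {c : ℝ}
    (hX : X ⊆ Metric.sphere 0 1) (hc : 0 < 1 + finrank ℝ E * c)
    (hXc : ∀ x ∈ X, ∀ y ∈ X, c ≤ ⟪x, y⟫) :
    (0 : E) ∉ convexHull ℝ X := by
  intro h0
  obtain ⟨ι, _, z, w, hzX, hz, hw, hw1, hwz⟩ := eq_pos_convex_span_of_mem_convexHull h0
  classical
  have hzn : ∀ i, ‖z i‖ = 1 := fun i ↦ by simpa using hX (hzX ⟨i, rfl⟩)
  have hcard : (Fintype.card ι : ℝ) ≤ finrank ℝ E + 1 := by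
    exact_mod_cast hz.card_le_finrank_succ.trans (Nat.add_le_add_right (Submodule.finrank_le _) 1)
  obtain ⟨i₀⟩ : Nonempty ι := by
    by_contra hempty
    simp [not_nonempty_iff.mp hempty] at hw1
  have hc1 : c ≤ 1 := by
    simpa [real_inner_self_eq_norm_sq, hzn] using hXc _ (hzX ⟨i₀, rfl⟩) _ (hzX ⟨i₀, rfl⟩)
  have hnorm := mul_sq_sum_add_mul_sum_sq_le_norm_sum_smul_sq (s := univ) (c := c)
    (fun i _ ↦ hzn i) (fun i _ j _ _ ↦ hXc _ (hzX ⟨i, rfl⟩) _ (hzX ⟨j, rfl⟩))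
    (fun i _ ↦ (hw i).le)
  have hsq : (1 : ℝ) ≤ Fintype.card ι * ∑ i, w i ^ 2 := by
    simpa [hw1] using sq_sum_le_card_mul_sum_sq (s := univ) (f := w)
  rw [hw1, hwz, norm_zero] at hnorm
  have hS : 0 ≤ ∑ i, w i ^ 2 := sum_nonneg fun i _ ↦ sq_nonneg (w i)
  nlinarith [mul_nonneg (sub_nonneg.2 hc1) (mul_nonneg (sub_nonneg.2 hcard) hS),
    mul_nonneg (sub_nonneg.2 hc1) (sub_nonneg.2 hsq)]

theorem cos_le_inner_of_arccos_inner_le {x y : E} (hx : ‖x‖ = 1) (hy : ‖y‖ = 1) {δ : ℝ}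
    (hδ : δ ≤ Real.pi) (h : Real.arccos ⟪x, y⟫ ≤ δ) : Real.cos δ ≤ ⟪x, y⟫ := by
  have hangle : InnerProductGeometry.angle x y = Real.arccos ⟪x, y⟫ := by
    simp [InnerProductGeometry.angle, hx, hy]
  calc Real.cos δ ≤ Real.cos (InnerProductGeometry.angle x y) :=
        Real.cos_le_cos_of_nonneg_of_le_pi (InnerProductGeometry.angle_nonneg x y) hδ (hangle ▸ h)
    _ = ⟪x, y⟫ := by simp [InnerProductGeometry.cos_angle, hx, hy]

end InnerProductSpace

/-- No subset of the unit circle `S¹ ⊂ ℝ²` of geodesic (angular) diameter strictly less than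
`2π/3` contains the origin in its convex hull. -/
theorem stmt0 (X : Set (EuclideanSpace ℝ (Fin 2)))
    (hX : X ⊆ Metric.sphere (0 : EuclideanSpace ℝ (Fin 2)) 1)
    (hdiam : ∃ δ : ℝ, δ < 2 * Real.pi / 3 ∧
      ∀ x ∈ X, ∀ y ∈ X, Real.arccos ⟪x, y⟫ ≤ δ) :
    (0 : EuclideanSpace ℝ (Fin 2)) ∉ convexHull ℝ X := by
  intro h0
  obtain ⟨δ, hδ, hXδ⟩ := hdiam
  obtain ⟨x, hx⟩ := convexHull_nonempty_iff.mp ⟨0, h0⟩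
  have hδ0 : 0 ≤ δ := (Real.arccos_nonneg _).trans (hXδ x hx x hx)
  have hcos : -(1 / 2) < Real.cos δ := by
    have hcos_two_pi_div_three : Real.cos (2 * Real.pi / 3) = -(1 / 2) := by
      rw [show 2 * Real.pi / 3 = Real.pi - Real.pi / 3 by ring, Real.cos_pi_sub,
        Real.cos_pi_div_three]
    rw [← hcos_two_pi_div_three]
    exact Real.cos_lt_cos_of_nonneg_of_le_pi hδ0 (by linarith [Real.pi_pos]) hδ
  refine zero_notMem_convexHull_of_le_inner hX (c := Real.cos δ) ?_ ?_ h0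
  · rw [finrank_euclideanSpace_fin, Nat.cast_ofNat]
    linarith
  · intro x hx y hy
    exact cos_le_inner_of_arccos_inner_le (by simpa using hX hx) (by simpa using hX hy)
      (by linarith [Real.pi_pos]) (hXδ x hx y hy)
end

section
/- For any finite graph G, the box complex of the cone graph CG is isomorphic (as a ℤ/2-simplicial complex) to the suspension of the box complex of G. Concretely: for every face σ of B₀(G), both σ ∪ {•} and σ ∪ {−•} are faces of B₀(CG), where ± • are the two new vertices corresponding to the cone vertex, and every face of B₀(CG) arises this way or is a face of B₀(G). -/
/-!
A set of signed vertices of `CG` is a face of `B₀(CG)` exactly when its trace on `±V(G)` is a face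
of `B₀(G)` and it does not contain both `•` and `−•`: the cone vertex is adjacent to every vertex
of `G` but, having no loop, not to itself.
-/

/-- The cone over a graph: add a new vertex (`none`) adjacent to all vertices of `G`. -/
def coneGraph {V : Type*} (G : SimpleGraph V) : SimpleGraph (Option V) where
  Adj a b := a ≠ b ∧ ∀ v w : V, a = some v → b = some w → G.Adj v w
  symm := by
    constructor
    rintro a b ⟨hab, h⟩
    exact ⟨hab.symm, fun v w hb ha => (h w v ha hb).symm⟩
  loopless := by constructor; rintro a ⟨haa, -⟩; exact haa rfl

/-- Faces of the box complex `B₀(G)`: vertices are `V ⊕ V` (positive and negative copies), and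
`σ` is a face iff every positive vertex `v` and negative vertex `w` of `σ` satisfy `Adj v w`. -/
def IsBoxFace {V : Type*} (G : SimpleGraph V) (σ : Set (V ⊕ V)) : Prop :=
  ∀ v w : V, Sum.inl v ∈ σ → Sum.inr w ∈ σ → G.Adj v w

section

variable {V : Type*} (G : SimpleGraph V)

@[simp]
lemma coneGraph_adj_some_some {v w : V} : (coneGraph G).Adj (some v) (some w) ↔ G.Adj v w :=
  ⟨fun h => h.2 v w rfl rfl, fun h => ⟨by simpa using h.ne, by rintro _ _ ⟨⟩ ⟨⟩; exact h⟩⟩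

lemma coneGraph_adj_none_some (w : V) : (coneGraph G).Adj none (some w) :=
  ⟨by simp, by simp⟩

lemma coneGraph_adj_some_none (v : V) : (coneGraph G).Adj (some v) none :=
  (coneGraph_adj_none_some G v).symm

theorem isBoxFace_coneGraph_iff {τ : Set (Option V ⊕ Option V)} :
    IsBoxFace (coneGraph G) τ ↔
      IsBoxFace G (Sum.map some some ⁻¹' τ) ∧ ¬(Sum.inl none ∈ τ ∧ Sum.inr none ∈ τ) := by
  refine ⟨fun h => ⟨fun v w hv hw => (coneGraph_adj_some_some G).1 (h _ _ hv hw),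
    fun ⟨hl, hr⟩ => (coneGraph G).irrefl (h _ _ hl hr)⟩, fun ⟨h, hnone⟩ => ?_⟩
  rintro (_ | v) (_ | w) hv hw
  · exact absurd ⟨hv, hw⟩ hnone
  · exact coneGraph_adj_none_some G w
  · exact coneGraph_adj_some_none G v
  · exact (coneGraph_adj_some_some G).2 (h v w hv hw)

end

theorem Sum.preimage_map_some_image_union_singleton {V : Type*} (σ : Set (V ⊕ V))
    {x : Option V ⊕ Option V} (hx : x = Sum.inl none ∨ x = Sum.inr none) :
    Sum.map some some ⁻¹' (Sum.map some some '' σ ∪ {x}) = σ := by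
  have hinj : Function.Injective (Sum.map some some : V ⊕ V → _) :=
    (Option.some_injective V).sumMap (Option.some_injective V)
  rw [Set.preimage_union, hinj.preimage_image, Set.union_eq_left]
  rintro (v | v) <;> rcases hx with rfl | rfl <;> simp

theorem Sum.eq_image_map_some_preimage {V : Type*} (τ : Set (Option V ⊕ Option V))
    (hnone : ¬(Sum.inl none ∈ τ ∧ Sum.inr none ∈ τ)) :
    τ = Sum.map some some '' (Sum.map some some ⁻¹' τ) ∨
      τ = Sum.map some some '' (Sum.map some some ⁻¹' τ) ∪ {Sum.inl none} ∨
      τ = Sum.map some some '' (Sum.map some some ⁻¹' τ) ∪ {Sum.inr none} := by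
  by_cases hl : Sum.inl none ∈ τ <;> by_cases hr : Sum.inr none ∈ τ
  · exact absurd ⟨hl, hr⟩ hnone
  · exact .inr (.inl (Set.ext fun z => by rcases z with (_ | v) | (_ | v) <;> simp [hl, hr]))
  · exact .inr (.inr (Set.ext fun z => by rcases z with (_ | v) | (_ | v) <;> simp [hl, hr]))
  · exact .inl (Set.ext fun z => by rcases z with (_ | v) | (_ | v) <;> simp [hl, hr])

theorem stmt11_general {V : Type*} (G : SimpleGraph V) :
    (∀ σ : Set (V ⊕ V), IsBoxFace G σ →
      IsBoxFace (coneGraph G) (Sum.map some some '' σ ∪ {Sum.inl none}) ∧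
      IsBoxFace (coneGraph G) (Sum.map some some '' σ ∪ {Sum.inr none})) ∧
    (∀ τ : Set (Option V ⊕ Option V), IsBoxFace (coneGraph G) τ →
      ∃ σ : Set (V ⊕ V), IsBoxFace G σ ∧
        (τ = Sum.map some some '' σ ∨
         τ = Sum.map some some '' σ ∪ {Sum.inl none} ∨
         τ = Sum.map some some '' σ ∪ {Sum.inr none})) := by
  refine ⟨fun σ hσ => ⟨?_, ?_⟩, fun τ hτ => ?_⟩
  · rw [isBoxFace_coneGraph_iff, Sum.preimage_map_some_image_union_singleton σ (.inl rfl)]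
    exact ⟨hσ, by simp⟩
  · rw [isBoxFace_coneGraph_iff, Sum.preimage_map_some_image_union_singleton σ (.inr rfl)]
    exact ⟨hσ, by simp⟩
  · obtain ⟨hσ, hnone⟩ := (isBoxFace_coneGraph_iff G).1 hτ
    exact ⟨_, hσ, Sum.eq_image_map_some_preimage τ hnone⟩

/-- The box complex of the cone graph is the suspension of the box complex of `G`:
for every face `σ` of `B₀(G)` both `σ ∪ {•}` and `σ ∪ {−•}` are faces of `B₀(CG)`, and every
face of `B₀(CG)` is a face of `B₀(G)` or arises this way. -/
theorem stmt11 {V : Type*} [Fintype V] (G : SimpleGraph V) :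
    (∀ σ : Set (V ⊕ V), IsBoxFace G σ →
      IsBoxFace (coneGraph G) (Sum.map some some '' σ ∪ {Sum.inl none}) ∧
      IsBoxFace (coneGraph G) (Sum.map some some '' σ ∪ {Sum.inr none})) ∧
    (∀ τ : Set (Option V ⊕ Option V), IsBoxFace (coneGraph G) τ →
      ∃ σ : Set (V ⊕ V), IsBoxFace G σ ∧
        (τ = Sum.map some some '' σ ∨
         τ = Sum.map some some '' σ ∪ {Sum.inl none} ∨
         τ = Sum.map some some '' σ ∪ {Sum.inr none})) :=
  stmt11_general G
end

section
/- Let A₁, …, A_{n+1} be a cover of S^d such that A₁, …, A_n are each open or closed, no Aᵢ contains a pair of antipodal points, and every subset of S^d of diameter at most t is contained in some Aᵢ. If {x₁,…,x_m} ⊂ S^d has diameter at most t, then there exists a single index j with 1 ≤ j ≤ n such that either {x₁,…,x_m} ⊆ A_j or {−x₁,…,−x_m} ⊆ A_j. -/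
open scoped RealInnerProductSpace

/-- The unit sphere `S^d`. -/
abbrev Sph (d : ℕ) := Metric.sphere (0 : EuclideanSpace ℝ (Fin (d + 1))) 1

/-- The geodesic (angular) distance on the unit sphere. -/
noncomputable def gdist {d : ℕ} (x y : Sph d) : ℝ :=
  Real.arccos ⟪(x : EuclideanSpace ℝ (Fin (d + 1))), (y : EuclideanSpace ℝ (Fin (d + 1)))⟫

/-! The set `{x₁, …, x_m}` and its antipode both have diameter at most `t`, so each lies in some
`Aᵢ`. If both lay in `A_{n+1}`, then `A_{n+1}` would contain antipodal points unless `m = 0`; and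
`n ≥ 1` because a cover of the sphere by sets free of antipodal pairs needs at least two sets. -/

lemma gdist_neg_neg {d : ℕ} (x y : Sph d) : gdist (-x) (-y) = gdist x y := by
  simp [gdist, coe_neg_sphere]

instance {d : ℕ} : Nonempty (Sph d) :=
  (NormedSpace.sphere_nonempty.mpr zero_le_one).to_subtype

lemma nontrivial_of_iUnion_eq_univ_of_neg_notMem {α ι : Type*} [Neg α] [Nonempty α]
    {A : ι → Set α} (hcover : ⋃ i, A i = Set.univ) (hanti : ∀ i, ∀ x, ¬ (x ∈ A i ∧ -x ∈ A i)) :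
    Nontrivial ι := by
  obtain ⟨p⟩ := ‹Nonempty α›
  obtain ⟨i, hi⟩ := Set.mem_iUnion.mp (hcover ▸ Set.mem_univ p)
  obtain ⟨j, hj⟩ := Set.mem_iUnion.mp (hcover ▸ Set.mem_univ (-p))
  exact ⟨i, j, fun hij => hanti i p ⟨hi, hij ▸ hj⟩⟩

theorem stmt13_general (d n m : ℕ) (t : ℝ) (A : Fin (n + 1) → Set (Sph d))
    (hcover : (⋃ i, A i) = Set.univ)
    (hanti : ∀ i, ∀ x : Sph d, ¬ (x ∈ A i ∧ -x ∈ A i))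
    (hsmall : ∀ B : Set (Sph d), (∀ y ∈ B, ∀ z ∈ B, gdist y z ≤ t) → ∃ i, B ⊆ A i)
    (x : Fin m → Sph d) (hx : ∀ i j, gdist (x i) (x j) ≤ t) :
    ∃ j : Fin n, (∀ i, x i ∈ A j.castSucc) ∨ (∀ i, -(x i) ∈ A j.castSucc) := by
  obtain ⟨i₁, h₁⟩ := hsmall (Set.range x) (by rintro _ ⟨a, rfl⟩ _ ⟨b, rfl⟩; exact hx a b)
  obtain ⟨i₂, h₂⟩ := hsmall (Set.range (-x)) (by
    rintro _ ⟨a, rfl⟩ _ ⟨b, rfl⟩; simpa only [Pi.neg_apply, gdist_neg_neg] using hx a b)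
  induction i₁ using Fin.lastCases with
  | cast j => exact ⟨j, Or.inl fun i => h₁ ⟨i, rfl⟩⟩
  | last =>
  induction i₂ using Fin.lastCases with
  | cast j => exact ⟨j, Or.inr fun i => h₂ ⟨i, rfl⟩⟩
  | last =>
  have hm : IsEmpty (Fin m) := ⟨fun i => hanti _ (x i) ⟨h₁ ⟨i, rfl⟩, h₂ ⟨i, rfl⟩⟩⟩
  have hn : 2 ≤ n + 1 :=
    Fin.nontrivial_iff_two_le.mp (nontrivial_of_iUnion_eq_univ_of_neg_notMem hcover hanti)
  exact ⟨⟨0, by omega⟩, Or.inl isEmptyElim⟩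

/-- Let `A₁, …, A_{n+1}` cover `S^d`, with `A₁, …, A_n` each open or closed, no `Aᵢ` containing
antipodal points, and every subset of diameter at most `t` contained in some `Aᵢ`.  If
`{x₁, …, x_m}` has diameter at most `t`, then some single `A_j` with `j ≤ n` contains all the
`xᵢ` or all the `−xᵢ`. -/
theorem stmt13 (d n m : ℕ) (t : ℝ) (A : Fin (n + 1) → Set (Sph d))
    (hcover : (⋃ i, A i) = Set.univ)
    (hopcl : ∀ j : Fin n, IsOpen (A j.castSucc) ∨ IsClosed (A j.castSucc))
    (hanti : ∀ i, ∀ x : Sph d, ¬ (x ∈ A i ∧ -x ∈ A i))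
    (hsmall : ∀ B : Set (Sph d), (∀ y ∈ B, ∀ z ∈ B, gdist y z ≤ t) → ∃ i, B ⊆ A i)
    (x : Fin m → Sph d) (hx : ∀ i j, gdist (x i) (x j) ≤ t) :
    ∃ j : Fin n, (∀ i, x i ∈ A j.castSucc) ∨ (∀ i, -(x i) ∈ A j.castSucc) :=
  stmt13_general d n m t A hcover hanti hsmall x hx
end
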